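/- Any ℤ-graded linear map f : M(s,ε) → M(-s,ε) commuting with the actions of E and F (equivalently, f(v_n) = f_n v'_n with (s+n+1)f_{n+2} = (-s+n+1)f_n) is uniquely determined by a single value f_{ε}; hence the space of intertwining operators M(s,ε) → M(-s,ε) is at most one-dimensional. -/

import Mathlib

/- The defining relation of an intertwiner is a first-order linear recurrence
   a k * f (k + 1) = b k * f k whose coefficients a k = s + n + 1 and b k = -s + n + 1
   (n = ε + 2k) never vanish because s - ε is not an odd integer. Such a recurrence can be
   run in both directions, so a solution is determined by f 0; and for two solutions f, g
   the combination g 0 • f - f 0 • g solves it and vanishes at 0, hence everywhere. -/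

def Intertwiner (s : ℂ) (ε : ℤ) (f : ℤ → ℂ) : Prop :=
  ∀ k : ℤ, (s + ((ε : ℂ) + 2 * (k : ℂ)) + 1) * f (k + 1)
    = (-s + ((ε : ℂ) + 2 * (k : ℂ)) + 1) * f k

def IsRecurrenceSolution {R : Type*} [Mul R] (a b f : ℤ → R) : Prop :=
  ∀ k : ℤ, a k * f (k + 1) = b k * f k

namespace IsRecurrenceSolution

variable {R : Type*} {a b f g : ℤ → R}

theorem zero [MulZeroClass R] : IsRecurrenceSolution a b (0 : ℤ → R) := fun k => by simp

theorem linear_combination [CommRing R] (hf : IsRecurrenceSolution a b f)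
    (hg : IsRecurrenceSolution a b g) (c d : R) :
    IsRecurrenceSolution a b (fun k => c * f k + d * g k) := fun k => by
  linear_combination c * hf k + d * hg k

theorem eq_of_apply_zero_eq [Mul R] [Zero R] [IsLeftCancelMulZero R] (ha : ∀ k, a k ≠ 0) (hb : ∀ k, b k ≠ 0)
    (hf : IsRecurrenceSolution a b f) (hg : IsRecurrenceSolution a b g) (h0 : f 0 = g 0) :
    f = g := by
  funext k
  induction k using Int.induction_on with
  | zero => exact h0
  | succ i ih => exact mul_left_cancel₀ (ha i) (by rw [hf i, hg i, ih])
  | pred i ih =>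
    have hf' := hf (-i - 1)
    have hg' := hg (-i - 1)
    rw [sub_add_cancel] at hf' hg'
    exact mul_left_cancel₀ (hb (-i - 1)) (by rw [← hf', ← hg', ih])

theorem exists_linear_dependence [CommRing R] [IsDomain R] (ha : ∀ k, a k ≠ 0)
    (hb : ∀ k, b k ≠ 0) (hf : IsRecurrenceSolution a b f) (hg : IsRecurrenceSolution a b g) :
    ∃ c d : R, ¬(c = 0 ∧ d = 0) ∧ ∀ k, c * f k + d * g k = 0 := by
  by_cases hg0 : g 0 = 0
  · have hg_zero : g = 0 := eq_of_apply_zero_eq ha hb hg zero hg0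
    exact ⟨0, 1, by simp, fun k => by simp [hg_zero]⟩
  · refine ⟨g 0, -f 0, fun h => hg0 h.1, fun k => ?_⟩
    have hcomb := eq_of_apply_zero_eq ha hb (hf.linear_combination hg (g 0) (-f 0)) zero
      (by simp only [Pi.zero_apply]; ring)
    exact congrFun hcomb k

end IsRecurrenceSolution

section Intertwiner

variable {s : ℂ} {ε : ℤ}

theorem intertwiner_iff_isRecurrenceSolution {f : ℤ → ℂ} :
    Intertwiner s ε f ↔ IsRecurrenceSolution (fun k => s + ((ε : ℂ) + 2 * (k : ℂ)) + 1)
      (fun k => -s + ((ε : ℂ) + 2 * (k : ℂ)) + 1) f :=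
  Iff.rfl

theorem intertwiner_lhs_coeff_ne_zero (hs : ∀ k : ℤ, s - (ε : ℂ) ≠ 2 * (k : ℂ) + 1) (k : ℤ) :
    s + ((ε : ℂ) + 2 * (k : ℂ)) + 1 ≠ 0 := fun h =>
  hs (-ε - k - 1) (by push_cast; linear_combination h)

theorem intertwiner_rhs_coeff_ne_zero (hs : ∀ k : ℤ, s - (ε : ℂ) ≠ 2 * (k : ℂ) + 1) (k : ℤ) :
    -s + ((ε : ℂ) + 2 * (k : ℂ)) + 1 ≠ 0 := fun h =>
  hs k (by linear_combination -h)

end Intertwiner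

theorem stmt19_general (s : ℂ) (ε : ℤ)
    (hs : ∀ k : ℤ, s - (ε : ℂ) ≠ 2 * (k : ℂ) + 1) :
    (∀ f g : ℤ → ℂ, Intertwiner s ε f → Intertwiner s ε g →
      f 0 = g 0 → ∀ k : ℤ, f k = g k) ∧
    (∀ f g : ℤ → ℂ, Intertwiner s ε f → Intertwiner s ε g →
      ∃ c d : ℂ, ¬(c = 0 ∧ d = 0) ∧ ∀ k : ℤ, c * f k + d * g k = 0) := by
  have ha := intertwiner_lhs_coeff_ne_zero hs
  have hb := intertwiner_rhs_coeff_ne_zero hs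
  refine ⟨fun f g hf hg h0 => ?_, fun f g hf hg => ?_⟩
  · rw [intertwiner_iff_isRecurrenceSolution] at hf hg
    exact congrFun (hf.eq_of_apply_zero_eq ha hb hg h0)
  · rw [intertwiner_iff_isRecurrenceSolution] at hf hg
    exact hf.exists_linear_dependence ha hb hg

/-- A graded intertwiner M(s,ε) → M(-s,ε) is uniquely determined by the single
    value f_ε; hence the space of intertwining operators is at most
    one-dimensional. -/
theorem stmt19 (s : ℂ) (ε : ℤ) (hε : ε = 0 ∨ ε = 1)
    (hs : ∀ k : ℤ, s - (ε : ℂ) ≠ 2 * (k : ℂ) + 1) :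
    (∀ f g : ℤ → ℂ, Intertwiner s ε f → Intertwiner s ε g →
      f 0 = g 0 → ∀ k : ℤ, f k = g k) ∧
    (∀ f g : ℤ → ℂ, Intertwiner s ε f → Intertwiner s ε g →
      ∃ c d : ℂ, ¬(c = 0 ∧ d = 0) ∧ ∀ k : ℤ, c * f k + d * g k = 0) :=
  stmt19_general s ε hs
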